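/- arXiv:2007.03402 — 4 statements merged into one kernel-verified Lean document; each statement's English description precedes it below -/
import Mathlib

section
/- A minimal +k-substring and a minimal −k-substring of a binary word cannot intersect (share any index), for k ≥ 1. -/
/-!
Pass to the prefix balances `P t = bal (x.take t)`, a walk on `ℤ` with steps of size at most one,
under which `x[i,j]` becomes the interval `[i, j + 1]` with rise `P (j + 1) - P i`. By the discrete
intermediate value theorem, on a minimal interval of positive rise the walk stays strictly above
its starting value and strictly below its final value; on one of negative rise the reverse holds.
If minimal intervals of rise `k` and `-k` overlap, comparing these bounds at the endpoints
that lie in both intervals gives a contradiction.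
-/

/-- Balance of a binary word: number of 0s (false) minus number of 1s (true). -/
def bal (s : List Bool) : ℤ := (s.count false : ℤ) - (s.count true : ℤ)

/-- The substring x[i..j] (inclusive, 0-indexed). -/
def sub (x : List Bool) (i j : ℕ) : List Bool := (x.drop i).take (j + 1 - i)

/-- x[i,j] is a minimal substring: it contains no proper substring with the same balance. -/
def IsMinimal (x : List Bool) (i j : ℕ) : Prop :=
  i ≤ j ∧ j < x.length ∧
    ∀ i' j', i ≤ i' → i' ≤ j' → j' ≤ j → (i', j') ≠ (i, j) →
      bal (sub x i' j') ≠ bal (sub x i j)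

lemma bal_append (s t : List Bool) : bal (s ++ t) = bal s + bal t := by
  simp only [bal, List.count_append]
  push_cast
  ring

def prefixBal (x : List Bool) (t : ℕ) : ℤ := bal (x.take t)

lemma bal_sub (x : List Bool) {i j : ℕ} (h : i ≤ j + 1) :
    bal (sub x i j) = prefixBal x (j + 1) - prefixBal x i := by
  rw [prefixBal, prefixBal, sub, show j + 1 = i + (j + 1 - i) by omega, List.take_add,
    bal_append, show i + (j + 1 - i) - i = j + 1 - i by omega]
  ring

lemma abs_prefixBal_succ_sub_le (x : List Bool) (t : ℕ) :
    |prefixBal x (t + 1) - prefixBal x t| ≤ 1 := by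
  rw [prefixBal, prefixBal, List.take_add_one, bal_append, add_sub_cancel_left]
  rcases x[t]? with _ | (_ | _) <;> simp [bal]

lemma exists_eq_of_succ_le_add_one {G : ℕ → ℤ} (hG : ∀ t, G (t + 1) ≤ G t + 1) {a b : ℕ} {c : ℤ}
    (hab : a ≤ b) (ha : G a ≤ c) (hb : c ≤ G b) : ∃ s, a ≤ s ∧ s ≤ b ∧ G s = c := by
  induction b, hab using Nat.le_induction with
  | base => exact ⟨a, le_rfl, le_rfl, le_antisymm ha hb⟩
  | succ b hab ih =>
    by_cases hcb : c ≤ G b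
    · obtain ⟨s, has, hsb, hs⟩ := ih hcb
      exact ⟨s, has, hsb.trans b.le_succ, hs⟩
    · exact ⟨b + 1, by omega, le_rfl, by have := hG b; omega⟩

def IsMinimalRise (G : ℕ → ℤ) (a b : ℕ) : Prop :=
  ∀ a' b', a ≤ a' → a' < b' → b' ≤ b → G b' - G a' = G b - G a → a' = a ∧ b' = b

namespace IsMinimalRise

variable {G : ℕ → ℤ} {a b : ℕ}

lemma neg (h : IsMinimalRise G a b) : IsMinimalRise (-G) a b := by
  intro a' b' ha' hab' hb' hrise
  simp only [Pi.neg_apply, neg_sub_neg] at hrise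
  exact h a' b' ha' hab' hb' (by linarith)

lemma lt_apply (hG : ∀ t, G (t + 1) ≤ G t + 1) (h : IsMinimalRise G a b) (hpos : G a < G b)
    {t : ℕ} (hat : a < t) (htb : t ≤ b) : G a < G t := by
  by_contra! hta
  obtain ⟨s, hts, hsb, hs⟩ := exists_eq_of_succ_le_add_one hG htb hta hpos.le
  have hsb' : s < b := lt_of_le_of_ne hsb (by rintro rfl; omega)
  have := h s b (by omega) hsb' le_rfl (by rw [hs])
  omega

lemma apply_lt (hG : ∀ t, G (t + 1) ≤ G t + 1) (h : IsMinimalRise G a b) (hpos : G a < G b)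
    {t : ℕ} (hat : a ≤ t) (htb : t < b) : G t < G b := by
  by_contra! hbt
  obtain ⟨s, has, hst, hs⟩ := exists_eq_of_succ_le_add_one hG hat hpos.le hbt
  have has' : a < s := lt_of_le_of_ne has (by rintro rfl; omega)
  have := h a s le_rfl has' (by omega) (by rw [hs])
  omega

lemma not_overlap_of_rise_eq_neg (hG : ∀ t, |G (t + 1) - G t| ≤ 1) {a' b' : ℕ}
    (h : IsMinimalRise G a b) (h' : IsMinimalRise G a' b') (hpos : G a < G b)
    (hopp : G b' - G a' = -(G b - G a)) : ¬ (a < b' ∧ a' < b) := by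
  rintro ⟨hab', hab⟩
  have hup : ∀ t, G (t + 1) ≤ G t + 1 := fun t => by have := abs_le.mp (hG t); omega
  have hdown : ∀ t, (-G) (t + 1) ≤ (-G) t + 1 := fun t => by
    have := abs_le.mp (hG t); simp only [Pi.neg_apply]; omega
  have hpos' : (-G) a' < (-G) b' := by simp only [Pi.neg_apply]; omega
  have below_start : ∀ {t}, a' < t → t ≤ b' → G t < G a' := fun hat htb => by
    simpa using h'.neg.lt_apply hdown hpos' hat htb
  have above_end : ∀ {t}, a' ≤ t → t < b' → G b' < G t := fun hat htb => by
    simpa using h'.neg.apply_lt hdown hpos' hat htb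
  rcases le_total a a' with ha | ha <;> rcases le_total b b' with hb | hb
  · have := h.apply_lt hup hpos ha hab
    have := below_start hab hb
    omega
  · have := h.apply_lt hup hpos ha hab
    have := h.lt_apply hup hpos hab' hb
    omega
  · have := above_end ha hab'
    have := below_start hab hb
    omega
  · have := h.lt_apply hup hpos hab' hb
    have := above_end ha hab'
    omega

end IsMinimalRise

lemma IsMinimal.isMinimalRise_prefixBal {x : List Bool} {i j : ℕ} (h : IsMinimal x i j) :
    IsMinimalRise (prefixBal x) i (j + 1) := by
  intro a b hia hab hbj hrise
  by_contra hne
  refine h.2.2 a (b - 1) hia (by omega) (by omega) (by simp only [ne_eq, Prod.mk.injEq]; omega) ?_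
  rw [bal_sub x (by omega), bal_sub x (by omega), Nat.sub_add_cancel (by omega), hrise]

/-- A minimal +k-substring and a minimal −k-substring cannot intersect, for k ≥ 1. -/
theorem minimal_plus_minus_disjoint (x : List Bool) (k : ℕ) (hk : 1 ≤ k)
    (i j i' j' : ℕ)
    (h1 : IsMinimal x i j) (h2 : IsMinimal x i' j')
    (hb1 : bal (sub x i j) = (k : ℤ)) (hb2 : bal (sub x i' j') = -(k : ℤ)) :
    ¬ ∃ t, i ≤ t ∧ t ≤ j ∧ i' ≤ t ∧ t ≤ j' := by
  rintro ⟨t, hit, htj, hi't, htj'⟩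
  rw [bal_sub x (by omega)] at hb1 hb2
  refine IsMinimalRise.not_overlap_of_rise_eq_neg (abs_prefixBal_succ_sub_le x)
    h1.isMinimalRise_prefixBal h2.isMinimalRise_prefixBal (by omega) (by omega) ⟨?_, ?_⟩ <;> omega
end

section
/- Let x' = 1^k · x · 0^k. If x' contains a substring of balance k+1 that lies entirely within positions i to j with j < k+n, then x itself contains a substring of balance k+1. -/
/-- x is a Dyck word of depth at most k: every prefix has balance in [0,k] and total balance 0. -/
def DyckBounded (x : List Bool) (k : ℕ) : Prop :=
  (∀ p, p <+: x → 0 ≤ bal p ∧ bal p ≤ (k : ℤ)) ∧ bal x = 0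

@[simp]
lemma bal_nil : bal [] = 0 := rfl

@[simp]
lemma bal_cons_false (s : List Bool) : bal (false :: s) = bal s + 1 := by
  simp [bal]; ring

@[simp]
lemma bal_cons_true (s : List Bool) : bal (true :: s) = bal s - 1 := by
  simp [bal]; ring

lemma sub_infix_take (l : List Bool) (i j : ℕ) : sub l i j <:+: l.take (j + 1) := by
  rw [sub, ← List.drop_take]
  exact (List.drop_suffix _ _).isInfix

lemma exists_prefix_bal_eq {c : ℤ} (s : List Bool) (hc : 0 ≤ c) (hs : c ≤ bal s) :
    ∃ p, p <+: s ∧ bal p = c := by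
  induction s generalizing c with
  | nil => exact ⟨[], List.prefix_rfl, by rw [bal_nil] at hs ⊢; omega⟩
  | cons a s ih =>
    rcases hc.eq_or_lt with rfl | hc
    · exact ⟨[], List.nil_prefix, rfl⟩
    cases a
    · obtain ⟨p, hp, hbp⟩ := ih (c := c - 1) (by omega) (by rw [bal_cons_false] at hs; omega)
      exact ⟨false :: p, List.cons_prefix_cons.mpr ⟨rfl, hp⟩, by simp [hbp]⟩
    · obtain ⟨p, hp, hbp⟩ := ih (c := c + 1) (by omega) (by rw [bal_cons_true] at hs; omega)
      exact ⟨true :: p, List.cons_prefix_cons.mpr ⟨rfl, hp⟩, by simp [hbp]⟩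

lemma exists_infix_bal_ge_of_infix_replicate_true_append {s x : List Bool} {m : ℕ}
    (hs : s <:+: List.replicate m true ++ x) : ∃ u, u <:+: x ∧ bal s ≤ bal u := by
  induction m generalizing s with
  | zero => exact ⟨s, hs, le_rfl⟩
  | succ m ih =>
    rw [List.replicate_succ, List.cons_append, List.infix_cons_iff] at hs
    rcases hs with hs | hs
    · rcases List.prefix_cons_iff.mp hs with rfl | ⟨t, rfl, ht⟩
      · exact ⟨[], List.nil_infix, le_rfl⟩
      · obtain ⟨u, hu, hle⟩ := ih ht.isInfix
        exact ⟨u, hu, by rw [bal_cons_true]; omega⟩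
    · exact ih hs

theorem plus_substring_transfers_general (x : List Bool) (n k : ℕ) (hn : x.length = n)
    (i j : ℕ) (hj : j < k + n)
    (hbal : bal (sub (List.replicate k true ++ x ++ List.replicate k false) i j)
      = (k : ℤ) + 1) :
    ∃ s, s <:+: x ∧ bal s = (k : ℤ) + 1 := by
  have hwindow : sub (List.replicate k true ++ x ++ List.replicate k false) i j
      <:+: List.replicate k true ++ x := by
    refine (sub_infix_take _ i j).trans ?_
    rw [List.take_append_of_le_length (by simp; omega)]
    exact (List.take_prefix _ _).isInfix
  obtain ⟨u, hu, hle⟩ := exists_infix_bal_ge_of_infix_replicate_true_append hwindow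
  obtain ⟨p, hp, hbp⟩ := exists_prefix_bal_eq u (c := (k : ℤ) + 1) (by positivity) (hbal ▸ hle)
  exact ⟨p, hp.isInfix.trans hu, hbp⟩

/-- If x' = 1^k x 0^k has a substring of balance k+1 lying within positions i..j with
j < k+n, then x itself contains a substring of balance k+1. -/
theorem plus_substring_transfers (x : List Bool) (n k : ℕ) (hn : x.length = n)
    (i j : ℕ) (hij : i ≤ j) (hj : j < k + n)
    (hbal : bal (sub (List.replicate k true ++ x ++ List.replicate k false) i j)
      = (k : ℤ) + 1) :
    ∃ s, s <:+: x ∧ bal s = (k : ℤ) + 1 :=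
  plus_substring_transfers_general x n k hn i j hj hbal
end

section
/- Define blocks recursively: a (w,h)-block is a binary string B of even length w such that every prefix p of B satisfies 0 ≤ f(p) ≤ h, and f(B) ∈ {0, 2}, where f counts 0s minus 1s. If B1, …, B_{2m} are (w,h)-blocks and exactly m or m+1 of them have f(B_i) = 2, then B' = B1 B2 ⋯ B_{2m} 1^{2m} is a (2m(w+1), 2(m+1)+h)-block; moreover f(B') = 2 if m+1 of the B_i have balance 2, and f(B') = 0 if exactly m of them do. -/
/-- A (w,h)-block: a binary string of even length w, all prefix balances in [0,h],
total balance 0 or 2. -/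
def IsBlock (B : List Bool) (w h : ℕ) : Prop :=
  B.length = w ∧ Even w ∧ (∀ p, p <+: B → 0 ≤ bal p ∧ bal p ≤ (h : ℤ)) ∧
    (bal B = 0 ∨ bal B = 2)

/-!
The balance is additive, so a prefix of `B₁ ⋯ B₂ₘ` has balance `f(B₁ ⋯ Bⱼ) + f(p)` for a
prefix `p` of `Bⱼ₊₁`; this lies in `[0, 2c + h]`, where `c ∈ {m, m+1}` is the number of blocks of
balance 2, because all block balances are nonnegative. The trailing `1^{2m}` lowers the
balance from `2c ≥ 2m` step by step to `2c - 2m ∈ {0, 2}`, never below zero.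
-/

theorem List.prefix_append_iff {α : Type*} {p s t : List α} :
    p <+: s ++ t ↔ p <+: s ∨ ∃ q, q <+: t ∧ p = s ++ q := by
  constructor
  · rintro ⟨u, hu⟩
    rcases List.append_eq_append_iff.mp hu with ⟨a, rfl, -⟩ | ⟨a, rfl, rfl⟩
    · exact Or.inl (List.prefix_append p a)
    · exact Or.inr ⟨a, List.prefix_append a u, rfl⟩
  · rintro (hp | ⟨q, hq, rfl⟩)
    · exact hp.trans (List.prefix_append s t)
    · exact (List.prefix_append_right_inj s).mpr hq

lemma bal_replicate_true (n : ℕ) : bal (List.replicate n true) = -(n : ℤ) := by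
  simp [bal, List.count_replicate]

lemma bal_flatten (L : List (List Bool)) : bal L.flatten = (L.map bal).sum := by
  induction L with
  | nil => rfl
  | cons B L ih => rw [List.flatten_cons, bal_append, ih, List.map_cons, List.sum_cons]

lemma bal_flatten_ofFn {n : ℕ} (Bs : Fin n → List Bool) :
    bal (List.ofFn Bs).flatten = ∑ i, bal (Bs i) := by
  rw [bal_flatten, List.map_ofFn, List.sum_ofFn, Function.comp_def]

lemma sum_eq_two_mul_card_of_forall_eq_zero_or_two {ι : Type*} [Fintype ι] (f : ι → ℤ)
    (hf : ∀ i, f i = 0 ∨ f i = 2) :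
    ∑ i, f i = 2 * (Finset.univ.filter (fun i => f i = 2)).card := by
  rw [Finset.natCast_card_filter, Finset.mul_sum]
  refine Finset.sum_congr rfl fun i _ => ?_
  rcases hf i with h | h <;> simp [h]

lemma length_flatten_ofFn_of_forall_length_eq {α : Type*} {n w : ℕ} (Bs : Fin n → List α)
    (hw : ∀ i, (Bs i).length = w) : (List.ofFn Bs).flatten.length = n * w := by
  simp [List.length_flatten, List.map_ofFn, Function.comp_def, hw]

def PrefixBalBounded (s : List Bool) (h : ℤ) : Prop :=
  ∀ p, p <+: s → 0 ≤ bal p ∧ bal p ≤ h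

namespace PrefixBalBounded

variable {s t : List Bool} {a b : ℤ}

lemma bal_nonneg (hs : PrefixBalBounded s a) : 0 ≤ bal s :=
  (hs s (List.prefix_refl s)).1

lemma bal_le (hs : PrefixBalBounded s a) : bal s ≤ a :=
  (hs s (List.prefix_refl s)).2

lemma mono (hs : PrefixBalBounded s a) (hab : a ≤ b) : PrefixBalBounded s b :=
  fun p hp => ⟨(hs p hp).1, (hs p hp).2.trans hab⟩

lemma append (hs : PrefixBalBounded s a) (ht : PrefixBalBounded t b) (hab : a ≤ bal s + b) :
    PrefixBalBounded (s ++ t) (bal s + b) := by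
  intro p hp
  rcases List.prefix_append_iff.mp hp with hp | ⟨q, hq, rfl⟩
  · exact ⟨(hs p hp).1, (hs p hp).2.trans hab⟩
  · rw [bal_append]
    exact ⟨add_nonneg hs.bal_nonneg (ht q hq).1, add_le_add_right (ht q hq).2 _⟩

lemma append_replicate_true (hs : PrefixBalBounded s a) {n : ℕ} (hn : (n : ℤ) ≤ bal s) :
    PrefixBalBounded (s ++ List.replicate n true) a := by
  intro p hp
  rcases List.prefix_append_iff.mp hp with hp | ⟨q, hq, rfl⟩
  · exact hs p hp
  · obtain ⟨hqn, hq⟩ := List.prefix_replicate_iff.mp hq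
    rw [bal_append, hq, bal_replicate_true]
    have := hs.bal_le
    omega

end PrefixBalBounded

lemma prefixBalBounded_flatten {L : List (List Bool)} {h : ℤ} (hh : 0 ≤ h)
    (hL : ∀ B ∈ L, PrefixBalBounded B h) :
    PrefixBalBounded L.flatten ((L.map bal).sum + h) := by
  induction L with
  | nil =>
    intro p hp
    rw [List.flatten_nil, List.prefix_nil] at hp
    subst hp
    exact ⟨le_rfl, by simpa [bal] using hh⟩
  | cons B L ih =>
    have hB := hL B List.mem_cons_self
    have hL' := ih fun C hC => hL C (List.mem_cons_of_mem B hC)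
    have hsum := hL'.bal_nonneg
    rw [bal_flatten] at hsum
    rw [List.flatten_cons, List.map_cons, List.sum_cons, add_assoc]
    exact hB.append hL' (by linarith [hB.bal_nonneg])

/-- Concatenating 2m blocks of which exactly m or m+1 have balance 2, followed by 1^{2m},
yields a (2m(w+1), 2(m+1)+h)-block whose balance reflects the EXACT-m/m+1 count. -/
theorem block_composition (m w h : ℕ) (Bs : Fin (2 * m) → List Bool)
    (hB : ∀ i, IsBlock (Bs i) w h)
    (c : ℕ) (hc : c = (Finset.univ.filter (fun i => bal (Bs i) = 2)).card)
    (hcm : c = m ∨ c = m + 1) :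
    IsBlock ((List.ofFn Bs).flatten ++ List.replicate (2 * m) true)
        (2 * m * (w + 1)) (2 * (m + 1) + h) ∧
    (c = m + 1 → bal ((List.ofFn Bs).flatten ++ List.replicate (2 * m) true) = 2) ∧
    (c = m → bal ((List.ofFn Bs).flatten ++ List.replicate (2 * m) true) = 0) := by
  have hsum : bal (List.ofFn Bs).flatten = 2 * c := by
    rw [bal_flatten_ofFn, hc]
    exact sum_eq_two_mul_card_of_forall_eq_zero_or_two _ fun i => (hB i).2.2.2
  have hbal : bal ((List.ofFn Bs).flatten ++ List.replicate (2 * m) true) = 2 * c - 2 * m := by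
    rw [bal_append, hsum, bal_replicate_true]; push_cast; ring
  have hprefix : PrefixBalBounded (List.ofFn Bs).flatten (2 * c + h) := by
    have := prefixBalBounded_flatten (Int.natCast_nonneg h) fun B hB' => by
      obtain ⟨i, rfl⟩ := List.mem_ofFn.mp hB'
      exact (hB i).2.2.1
    rwa [← bal_flatten, hsum] at this
  refine ⟨⟨?_, ⟨m * (w + 1), by ring⟩, ?_, by omega⟩, fun _ => by omega, fun _ => by omega⟩
  · rw [List.length_append, length_flatten_ofFn_of_forall_length_eq Bs fun i => (hB i).1,
      List.length_replicate]
    ring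
  · exact (hprefix.mono (by omega)).append_replicate_true (by omega)
end

section
/- Define L(0,κ) = (κ+1)² and L(μ,κ) = 2·Σ_{r=0}^{κ} L(μ−1, r) for μ ≥ 1. Then for all μ ≥ 0 and κ ≥ 0, L(μ,κ) < 2^{μ+1} · C(κ+μ+2, κ), where C denotes the binomial coefficient. -/
/-!
Induction on `μ`, with the binomial coefficient written as `C(κ+μ+2, μ+2)`. In that form the
recursion for `L` carries the bound from `μ` to `μ + 1` through the hockey-stick identity
`∑_{r ≤ κ} C(r+m, m) = C(κ+m+1, m+1)`, and the base case is `(κ+1)² < (κ+2)(κ+1)`.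
-/

/-- Size of the AND-OR formula for directed connectivity in a 2^μ × κ grid. -/
def L : ℕ → ℕ → ℕ
  | 0, κ => (κ + 1) ^ 2
  | (μ + 1), κ => 2 * ∑ r ∈ Finset.range (κ + 1), L μ r

open Finset

lemma sq_succ_lt_two_mul_choose_two (n : ℕ) : (n + 1) ^ 2 < 2 * (n + 2).choose 2 := by
  have h := Nat.add_one_mul_choose_eq (n + 1) 1
  rw [Nat.choose_one_right] at h
  nlinarith

theorem L_lt_two_pow_mul_choose (μ κ : ℕ) :
    L μ κ < 2 ^ (μ + 1) * (κ + μ + 2).choose (μ + 2) := by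
  induction μ generalizing κ with
  | zero => simpa [L] using sq_succ_lt_two_mul_choose_two κ
  | succ μ ih =>
    calc L (μ + 1) κ = 2 * ∑ r ∈ range (κ + 1), L μ r := rfl
      _ < 2 * ∑ r ∈ range (κ + 1), 2 ^ (μ + 1) * (r + (μ + 2)).choose (μ + 2) := by
        gcongr with r
        · exact nonempty_range_add_one
        · simpa only [add_assoc] using ih r
      _ = 2 ^ (μ + 1 + 1) * (κ + (μ + 1) + 2).choose (μ + 1 + 2) := by
        rw [← mul_sum, Nat.sum_range_add_choose]
        ring_nf

/-- L(μ,κ) < 2^{μ+1} · C(κ+μ+2, κ). -/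
theorem formula_size_bound (μ κ : ℕ) :
    L μ κ < 2 ^ (μ + 1) * Nat.choose (κ + μ + 2) κ := by
  rw [Nat.choose_symm_of_eq_add (add_assoc κ μ 2)]
  exact L_lt_two_pow_mul_choose μ κ
end
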